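/- Let G be a totally disconnected locally compact group, α a continuous endomorphism of G, and U a compact open subgroup of G that is tidy above for α. Then for all n ≥ 1: [α^{-n}(U) : α^{-n-1}(U) ∩ α^{-n}(U)] = [α^{-n}(U) ∩ U : α^{-n-1}(U) ∩ α^{-n}(U) ∩ U] = [U_{-n} : U_{-n-1}] = [U : U ∩ α⁻¹(U)]. -/

import Mathlib

open Pointwise Subgroup Filter

variable {G : Type*}

/-- The `n`-fold iterate of an endomorphism `α : G →* G`, as a monoid homomorphism. -/
def iterHom [Group G] (α : G →* G) : ℕ → G →* G
  | 0 => MonoidHom.id G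
  | n + 1 => α.comp (iterHom α n)

/-- The descending sequence `U_0 = U`, `U_{n+1} = U ⊓ α(U_n)`. -/
def seqU [Group G] (α : G →* G) (U : Subgroup G) : ℕ → Subgroup G
  | 0 => U
  | n + 1 => U ⊓ Subgroup.map α (seqU α U n)

/-- `U₊ = ⋂ₙ Uₙ`. -/
def Uplus [Group G] (α : G →* G) (U : Subgroup G) : Subgroup G := ⨅ n, seqU α U n

/-- `U₋ = ⋂ₙ α^{-n}(U)`. -/
def Uminus [Group G] (α : G →* G) (U : Subgroup G) : Subgroup G :=
  ⨅ n, Subgroup.comap (iterHom α n) U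

/-- `U₊₊ = ⋃ₙ αⁿ(U₊)` as a subset of `G`. -/
def Upp [Group G] (α : G →* G) (U : Subgroup G) : Set G :=
  ⋃ n, iterHom α n '' (Uplus α U : Set G)

/-- `U₋₋ = ⋃ₙ α^{-n}(U₋)` as a subset of `G`. -/
def Umm [Group G] (α : G →* G) (U : Subgroup G) : Set G :=
  ⋃ n, iterHom α n ⁻¹' (Uminus α U : Set G)

/-- `U₋ₙ = ⋂_{k=0}^{n} α^{-k}(U)`. -/
def Uneg [Group G] (α : G →* G) (U : Subgroup G) (n : ℕ) : Subgroup G :=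
  ⨅ k ∈ Finset.range (n + 1), Subgroup.comap (iterHom α k) U

/-- `U` is tidy above for `α` if `U = U₊U₋`. -/
def TidyAbove [Group G] (α : G →* G) (U : Subgroup G) : Prop :=
  (U : Set G) = (Uplus α U : Set G) * (Uminus α U : Set G)

/-- `U` is tidy below for `α` if `U₋₋` is closed. -/
def TidyBelow [Group G] [TopologicalSpace G] (α : G →* G) (U : Subgroup G) : Prop :=
  IsClosed (Umm α U)

/-- `U` is tidy for `α` if it is tidy above and tidy below for `α`. -/
def Tidy [Group G] [TopologicalSpace G] (α : G →* G) (U : Subgroup G) : Prop :=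
  TidyAbove α U ∧ TidyBelow α U

/-- The scale of `α`: the minimum of `[α(V) : α(V) ∩ V]` over compact open subgroups `V`. -/
noncomputable def scale [Group G] [TopologicalSpace G] (α : G →* G) : ℕ :=
  sInf {n : ℕ | ∃ V : Subgroup G, IsCompact (V : Set G) ∧ IsOpen (V : Set G) ∧
    n = Subgroup.relIndex V (Subgroup.map α V)}


section Aux

variable [Group G] (α : G →* G) (U : Subgroup G)

theorem iterHom_succ' (n : ℕ) (x : G) : iterHom α (n + 1) x = iterHom α n (α x) := by
  induction n with
  | zero => rfl
  | succ n ih =>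
    show α (iterHom α (n + 1) x) = α (iterHom α n (α x))
    rw [ih]

theorem mem_Uneg {n : ℕ} {x : G} : x ∈ Uneg α U n ↔ ∀ k ≤ n, iterHom α k x ∈ U := by
  simp [Uneg, Subgroup.mem_iInf, Nat.lt_succ_iff]

theorem mem_Uplus' {x : G} : x ∈ Uplus α U ↔ ∀ n, x ∈ seqU α U n := Subgroup.mem_iInf

theorem mem_Uminus' {x : G} : x ∈ Uminus α U ↔ ∀ n, iterHom α n x ∈ U := by
  simp [Uminus, Subgroup.mem_iInf]

theorem Uplus_le_U : Uplus α U ≤ U := iInf_le (fun n => seqU α U n) 0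

theorem Uminus_le_Uneg (n : ℕ) : Uminus α U ≤ Uneg α U n := by
  intro x hx
  rw [mem_Uneg]
  intro k _
  exact (mem_Uminus' α U).1 hx k

theorem Uneg_zero : Uneg α U 0 = U := by
  ext x
  rw [mem_Uneg]
  constructor
  · intro h; exact h 0 le_rfl
  · intro h k hk
    interval_cases k
    exact h

theorem Uneg_one : Uneg α U 1 = Subgroup.comap α U ⊓ U := by
  ext x
  rw [mem_Uneg, Subgroup.mem_inf, Subgroup.mem_comap]
  constructor
  · intro h
    exact ⟨h 1 le_rfl, h 0 (by norm_num)⟩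
  · rintro ⟨h1, h0⟩ k hk
    interval_cases k
    · exact h0
    · exact h1

/-- Transfer lemma for relative indices along a homomorphism inducing a bijection
of coset spaces. -/
theorem relIndex_eq_of_hom {A B A' B' : Subgroup G} (φ : G →* G)
    (hmap : ∀ x ∈ A', φ x ∈ A)
    (hB : ∀ x ∈ B', φ x ∈ B)
    (hinj : ∀ z ∈ A', φ z ∈ B → z ∈ B')
    (hsurj : ∀ y ∈ A, ∃ x ∈ A', (φ x)⁻¹ * y ∈ B) :
    B'.relIndex A' = B.relIndex A := by
  let f : A' ⧸ B'.subgroupOf A' → A ⧸ B.subgroupOf A :=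
    Quotient.map' (fun x => (⟨φ x, hmap x x.2⟩ : A))
      (by
        intro x y hxy
        rw [QuotientGroup.leftRel_apply, Subgroup.mem_subgroupOf] at hxy ⊢
        simpa using hB _ hxy)
  have hbij : Function.Bijective f := by
    constructor
    · intro a b
      refine Quotient.inductionOn₂' a b ?_
      intro x y h
      have h' : (Quotient.mk'' (⟨φ x, hmap x x.2⟩ : A) : A ⧸ B.subgroupOf A) =
          Quotient.mk'' (⟨φ y, hmap y y.2⟩ : A) := h
      rw [Quotient.eq'', QuotientGroup.leftRel_apply, Subgroup.mem_subgroupOf] at h'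
      apply Quotient.sound'
      rw [QuotientGroup.leftRel_apply, Subgroup.mem_subgroupOf]
      refine hinj _ (x⁻¹ * y : A').2 ?_
      simpa using h'
    · intro b
      refine Quotient.inductionOn' b ?_
      intro y
      obtain ⟨x, hx, hxy⟩ := hsurj (y : G) y.2
      refine ⟨Quotient.mk'' ⟨x, hx⟩, ?_⟩
      show (Quotient.mk'' (⟨φ x, _⟩ : A) : A ⧸ B.subgroupOf A) = Quotient.mk'' y
      apply Quotient.sound'
      rw [QuotientGroup.leftRel_apply, Subgroup.mem_subgroupOf]
      simpa using hxy
  exact Nat.card_congr (Equiv.ofBijective f hbij)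

theorem seqU_antitone' : ∀ n, seqU α U (n + 1) ≤ seqU α U n := by
  intro n
  induction n with
  | zero => exact inf_le_left
  | succ n ih =>
    show U ⊓ Subgroup.map α (seqU α U (n + 1)) ≤ U ⊓ Subgroup.map α (seqU α U n)
    exact inf_le_inf_left U (Subgroup.map_mono ih)

end Aux

section Top

variable [Group G] [TopologicalSpace G] [IsTopologicalGroup G] [TotallyDisconnectedSpace G]
  (α : G →* G) (U : Subgroup G)

theorem td_t2Space : T2Space G := by
  apply IsTopologicalGroup.t2Space_iff_one_closed.mpr
  rw [← connectedComponent_eq_singleton (1 : G)]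
  exact isClosed_connectedComponent

theorem seqU_isCompact (hα : Continuous α) (hUc : IsCompact (U : Set G)) :
    ∀ n, IsCompact ((seqU α U n : Set G)) := by
  have : T2Space G := td_t2Space
  intro n
  induction n with
  | zero => exact hUc
  | succ n ih =>
    show IsCompact ((U ⊓ Subgroup.map α (seqU α U n) : Subgroup G) : Set G)
    rw [Subgroup.coe_inf, Subgroup.coe_map]
    exact (ih.image hα).inter_left hUc.isClosed

theorem Uplus_subset_image (hα : Continuous α) (hUc : IsCompact (U : Set G)) :
    ∀ x ∈ Uplus α U, ∃ y ∈ Uplus α U, α y = x := by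
  have : T2Space G := td_t2Space
  intro x hx
  set F : ℕ → Set G := fun n => (seqU α U n : Set G) ∩ α ⁻¹' {x} with hF
  have hne : ∀ n, (F n).Nonempty := by
    intro n
    have hx1 : x ∈ seqU α U (n + 1) := (mem_Uplus' α U).1 hx (n + 1)
    have hx2 : x ∈ Subgroup.map α (seqU α U n) :=
      (inf_le_right : U ⊓ Subgroup.map α (seqU α U n) ≤ _) hx1
    obtain ⟨y, hy, hyx⟩ := hx2
    exact ⟨y, hy, by simp [hyx]⟩
  have hclosed : ∀ n, IsClosed (F n) :=
    fun n => ((seqU_isCompact α U hα hUc n).isClosed).inter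
      (IsClosed.preimage hα isClosed_singleton)
  have hdec : ∀ n, F (n + 1) ⊆ F n :=
    fun n => Set.inter_subset_inter_left _ (seqU_antitone' α U n)
  have hcompact : IsCompact (F 0) :=
    hUc.inter_right (IsClosed.preimage hα isClosed_singleton)
  obtain ⟨y, hy⟩ :=
    IsCompact.nonempty_iInter_of_sequence_nonempty_isCompact_isClosed F hdec hne hcompact hclosed
  rw [Set.mem_iInter] at hy
  refine ⟨y, (mem_Uplus' α U).2 fun n => (hy n).1, ?_⟩
  have := (hy 0).2
  simpa using this

theorem exists_iter_preimage (hα : Continuous α) (hUc : IsCompact (U : Set G)) :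
    ∀ n : ℕ, ∀ u ∈ Uplus α U, ∃ w ∈ Uplus α U,
      iterHom α n w = u ∧ ∀ k ≤ n, iterHom α k w ∈ Uplus α U := by
  intro n
  induction n with
  | zero =>
    intro u hu
    refine ⟨u, hu, rfl, ?_⟩
    intro k hk
    interval_cases k
    exact hu
  | succ n ih =>
    intro u hu
    obtain ⟨w', hw', hw'n, hw'k⟩ := ih u hu
    obtain ⟨w, hw, hww'⟩ := Uplus_subset_image α U hα hUc w' hw'
    refine ⟨w, hw, ?_, ?_⟩
    · rw [iterHom_succ', hww', hw'n]
    · intro k hk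
      cases k with
      | zero => exact hw
      | succ j =>
        rw [iterHom_succ', hww']
        exact hw'k j (Nat.succ_le_succ_iff.mp hk)

theorem tidy_decomp (hα : Continuous α) (hUc : IsCompact (U : Set G))
    (hU : TidyAbove α U) :
    ∀ n : ℕ, ∀ x : G, iterHom α n x ∈ U →
      ∃ w ∈ Uneg α U n, iterHom α (n + 1) (w⁻¹ * x) ∈ U := by
  intro n x hx
  have hx' : iterHom α n x ∈ (Uplus α U : Set G) * (Uminus α U : Set G) := by
    rw [← hU]; exact hx
  obtain ⟨a, ha, b, hb, hab⟩ := hx'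
  obtain ⟨w, hw, hwn, hwk⟩ := exists_iter_preimage α U hα hUc n a ha
  refine ⟨w, ?_, ?_⟩
  · rw [mem_Uneg]
    intro k hk
    exact Uplus_le_U α U (hwk k hk)
  · have hcalc : iterHom α n (w⁻¹ * x) = b := by
      rw [map_mul, map_inv, hwn, ← hab]
      group
    have : iterHom α (n + 1) (w⁻¹ * x) = α b := by
      show α (iterHom α n (w⁻¹ * x)) = α b
      rw [hcalc]
    rw [this]
    have hb1 : iterHom α 1 b ∈ U := (mem_Uminus' α U).1 hb 1
    simpa [iterHom] using hb1

end Top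

/-- For `U` tidy above and `n ≥ 1`:
`[α^{-n}(U) : α^{-n-1}(U) ∩ α^{-n}(U)] = [α^{-n}(U) ∩ U : α^{-n-1}(U) ∩ α^{-n}(U) ∩ U]
  = [U₋ₙ : U₋ₙ₋₁] = [U : U ∩ α⁻¹(U)]`. -/
theorem tidyAbove_out_index [Group G] [TopologicalSpace G] [IsTopologicalGroup G]
    [TotallyDisconnectedSpace G] [LocallyCompactSpace G]
    (α : G →* G) (hα : Continuous α)
    (U : Subgroup G) (hUc : IsCompact (U : Set G)) (hUo : IsOpen (U : Set G))
    (hU : TidyAbove α U) :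
    ∀ n : ℕ, 1 ≤ n →
      Subgroup.relIndex (Subgroup.comap (iterHom α (n + 1)) U)
          (Subgroup.comap (iterHom α n) U)
        = Subgroup.relIndex (Subgroup.comap (iterHom α (n + 1)) U)
            (Subgroup.comap (iterHom α n) U ⊓ U) ∧
      Subgroup.relIndex (Subgroup.comap (iterHom α (n + 1)) U)
          (Subgroup.comap (iterHom α n) U ⊓ U)
        = Subgroup.relIndex (Uneg α U (n + 1)) (Uneg α U n) ∧
      Subgroup.relIndex (Uneg α U (n + 1)) (Uneg α U n)
        = Subgroup.relIndex (Subgroup.comap α U) U := by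
  intro n hn
  have hUnegV : ∀ m : ℕ, Uneg α U m ≤ Subgroup.comap (iterHom α m) U ⊓ U := by
    intro m x hx
    rw [mem_Uneg] at hx
    exact Subgroup.mem_inf.2 ⟨Subgroup.mem_comap.2 (hx m le_rfl), hx 0 (Nat.zero_le m)⟩
  refine ⟨?_, ?_, ?_⟩
  · -- first equality
    refine (relIndex_eq_of_hom (MonoidHom.id G)
      (fun x hx => (Subgroup.mem_inf.1 hx).1)
      (fun x hx => hx)
      (fun z _ hz => hz) ?_).symm
    intro y hy
    obtain ⟨w, hw, hw2⟩ := tidy_decomp α U hα hUc hU n y (Subgroup.mem_comap.1 hy)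
    exact ⟨w, hUnegV n hw, Subgroup.mem_comap.2 hw2⟩
  · -- second equality
    refine (relIndex_eq_of_hom (MonoidHom.id G)
      (fun x hx => hUnegV n hx)
      (fun z hz => Subgroup.mem_comap.2 ((mem_Uneg α U).1 hz (n + 1) le_rfl))
      ?_ ?_).symm
    · intro z hz hz2
      rw [mem_Uneg] at hz ⊢
      intro k hk
      rcases hk.lt_or_eq with h | h
      · exact hz k (Nat.lt_succ_iff.mp h)
      · subst h
        exact Subgroup.mem_comap.1 hz2
    · intro y hy
      obtain ⟨w, hw, hw2⟩ :=
        tidy_decomp α U hα hUc hU n y (Subgroup.mem_comap.1 (Subgroup.mem_inf.1 hy).1)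
      exact ⟨w, hw, Subgroup.mem_comap.2 hw2⟩
  · -- third equality
    have key : ∀ m : ℕ, Subgroup.relIndex (Uneg α U (m + 1)) (Uneg α U m)
        = Subgroup.relIndex (Subgroup.comap α U) U := by
      intro m
      induction m with
      | zero =>
        rw [Uneg_zero, Uneg_one]
        exact Subgroup.inf_relIndex_right _ _
      | succ m ih =>
        rw [← ih]
        refine relIndex_eq_of_hom α ?_ ?_ ?_ ?_
        · intro x hx
          rw [mem_Uneg] at hx ⊢
          intro k hk
          rw [← iterHom_succ']
          exact hx (k + 1) (Nat.succ_le_succ hk)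
        · intro x hx
          rw [mem_Uneg] at hx ⊢
          intro k hk
          rw [← iterHom_succ']
          exact hx (k + 1) (Nat.succ_le_succ hk)
        · intro z hz hz2
          rw [mem_Uneg] at hz hz2 ⊢
          intro k hk
          cases k with
          | zero => exact hz 0 (Nat.zero_le _)
          | succ j =>
            rw [iterHom_succ']
            exact hz2 j (Nat.succ_le_succ_iff.mp hk)
        · intro y hy
          have hyU : y ∈ U := (mem_Uneg α U).1 hy 0 (Nat.zero_le m)
          have hy' : y ∈ (Uplus α U : Set G) * (Uminus α U : Set G) := by
            rw [← hU]; exact hyU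
          obtain ⟨a, ha, b, hb, hab⟩ := hy'
          have hbneg : ∀ j, b ∈ Uneg α U j := fun j => Uminus_le_Uneg α U j hb
          have haUneg : a ∈ Uneg α U m := by
            have h' : a = y * b⁻¹ := by rw [← hab]; group
            rw [h']
            exact mul_mem hy (inv_mem (hbneg m))
          obtain ⟨c, hc, hca⟩ := Uplus_subset_image α U hα hUc a ha
          refine ⟨c, ?_, ?_⟩
          · rw [mem_Uneg]
            intro k hk
            cases k with
            | zero => exact Uplus_le_U α U hc
            | succ j =>
              rw [iterHom_succ', hca]
              exact (mem_Uneg α U).1 haUneg j (Nat.succ_le_succ_iff.mp hk)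
          · rw [hca]
            have h' : a⁻¹ * y = b := by rw [← hab]; group
            rw [h']
            exact hbneg (m + 1)
    exact key n
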